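/- For every μ ∈ (0,1) and positive integer k, define G_μ(k) = k/(1+k^2) - √(k·tanh(√μ k)/√μ) / (1 + k·tanh(√μ k)/√μ). Then there exists a constant C > 0, independent of μ and k, such that |G_μ(k)| ≤ C·√μ. -/

import Mathlib

/-!
Write `s = √μ`, `K = k`, `b = K tanh(sK)/s` and `f x = x/(1+x²)`, so that `G_μ(k) = f K - f √b`.
Since `tanh t ≤ t`, we have `0 ≤ √b ≤ K`, and `f K - f √b = (K - √b)(1 - K√b)/((1+K²)(1+b))`
with `|1 - K√b| ≤ 1 + K²`. The gap `K² - b = (K/s)(t - tanh t)`, `t = sK`, is at most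
`(K/s) t tanh t = sKb` because `tanh t ≥ t/(1+t)` (equivalently `e^{2t} ≥ 1 + 2t`).
Hence `K - √b ≤ (K² - b)/K ≤ s b`, and `|G_μ(k)| ≤ s b/(1+b) ≤ √μ`.
-/

open Real Set

namespace Real

lemma sinh_le_mul_cosh {x : ℝ} (hx : 0 ≤ x) : sinh x ≤ x * cosh x := by
  have hmono : MonotoneOn (fun y ↦ y * cosh y - sinh y) (Ici 0) := by
    refine monotoneOn_of_deriv_nonneg (convex_Ici 0) (by fun_prop) (by fun_prop) fun y hy ↦ ?_
    rw [interior_Ici, mem_Ioi] at hy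
    have hderiv : HasDerivAt (fun y ↦ y * cosh y - sinh y) (y * sinh y) y := by
      simpa using ((hasDerivAt_id' y).fun_mul (hasDerivAt_cosh y)).fun_sub (hasDerivAt_sinh y)
    rw [hderiv.deriv]
    exact mul_nonneg hy.le (sinh_nonneg_iff.2 hy.le)
  simpa using hmono (mem_Ici.2 le_rfl) hx hx

lemma tanh_nonneg {x : ℝ} (hx : 0 ≤ x) : 0 ≤ tanh x := by
  rw [tanh_eq_sinh_div_cosh]
  exact div_nonneg (sinh_nonneg_iff.2 hx) (cosh_pos x).le

lemma tanh_le_self {x : ℝ} (hx : 0 ≤ x) : tanh x ≤ x := by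
  rw [tanh_eq_sinh_div_cosh, div_le_iff₀ (cosh_pos x)]
  exact sinh_le_mul_cosh hx

lemma div_one_add_le_tanh {x : ℝ} (hx : 0 ≤ x) : x / (1 + x) ≤ tanh x := by
  rw [tanh_eq_sinh_div_cosh, div_le_div_iff₀ (by positivity) (cosh_pos x), sinh_eq, cosh_eq]
  have hexp : 2 * x + 1 ≤ exp x * exp x := by
    rw [← exp_add, ← two_mul]; exact add_one_le_exp (2 * x)
  have hinv : exp x * exp (-x) = 1 := by rw [← exp_add, add_neg_cancel, exp_zero]
  have hscaled : (2 * x + 1) * exp (-x) ≤ exp x := by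
    calc (2 * x + 1) * exp (-x) ≤ exp x * exp x * exp (-x) :=
          mul_le_mul_of_nonneg_right hexp (exp_pos (-x)).le
      _ = exp x := by rw [mul_assoc, hinv, mul_one]
  nlinarith

end Real

lemma abs_div_one_add_sq_sub_le {r K : ℝ} (hr : 0 ≤ r) (hrK : r ≤ K) :
    |K / (1 + K ^ 2) - r / (1 + r ^ 2)| ≤ (K - r) / (1 + r ^ 2) := by
  have hK : 0 ≤ K := hr.trans hrK
  have hsplit : K / (1 + K ^ 2) - r / (1 + r ^ 2)
      = (K - r) / (1 + r ^ 2) * ((1 - K * r) / (1 + K ^ 2)) := by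
    field_simp
    ring
  have hfactor : |(1 - K * r) / (1 + K ^ 2)| ≤ 1 := by
    rw [abs_div, abs_of_pos (show 0 < 1 + K ^ 2 by positivity), div_le_one (by positivity), abs_le]
    constructor <;> nlinarith [mul_le_mul_of_nonneg_left hrK hK, mul_nonneg hK hr]
  rw [hsplit, abs_mul, abs_of_nonneg (div_nonneg (sub_nonneg.2 hrK) (by positivity))]
  exact mul_le_of_le_one_right (div_nonneg (sub_nonneg.2 hrK) (by positivity)) hfactor

lemma abs_div_one_add_sq_sub_sqrt_tanh_le {s K : ℝ} (hs : 0 < s) (hK : 0 < K) :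
    |K / (1 + K ^ 2) - √(K * tanh (s * K) / s) / (1 + K * tanh (s * K) / s)| ≤ s := by
  set b := K * tanh (s * K) / s
  have ht : 0 ≤ s * K := by positivity
  have hb0 : 0 ≤ b := div_nonneg (mul_nonneg hK.le (tanh_nonneg ht)) hs.le
  have hsb : s * b = K * tanh (s * K) := mul_div_cancel₀ _ hs.ne'
  have hbK : b ≤ K ^ 2 := by
    refine le_of_mul_le_mul_left ?_ hs
    nlinarith [mul_le_mul_of_nonneg_left (tanh_le_self ht) hK.le]
  have hgap : K ^ 2 - b ≤ s * K * b := by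
    have hlow := div_one_add_le_tanh ht
    rw [div_le_iff₀ (by positivity)] at hlow
    refine le_of_mul_le_mul_left ?_ hs
    nlinarith [mul_le_mul_of_nonneg_left hlow hK.le]
  have hr : √b ≤ K := sqrt_le_iff.2 ⟨hK.le, hbK⟩
  have hr2 : √b ^ 2 = b := sq_sqrt hb0
  have hdiff : K - √b ≤ s * b := by
    refine le_of_mul_le_mul_left ?_ hK
    nlinarith [sqrt_nonneg b]
  calc _ ≤ (K - √b) / (1 + √b ^ 2) := by
        simpa only [hr2] using abs_div_one_add_sq_sub_le (sqrt_nonneg b) hr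
    _ ≤ s := by
        rw [hr2, div_le_iff₀ (by positivity)]
        linarith

/-- There is C > 0, independent of μ ∈ (0,1) and k ≥ 1, with
|k/(1+k²) - √(k tanh(√μ k)/√μ)/(1 + k tanh(√μ k)/√μ)| ≤ C√μ. -/
theorem abs_G_mu_le_sqrt_mu :
    ∃ C : ℝ, 0 < C ∧ ∀ (μ : ℝ), 0 < μ → μ < 1 → ∀ (k : ℕ), 1 ≤ k →
      |(k : ℝ) / (1 + (k : ℝ) ^ 2)
        - Real.sqrt ((k : ℝ) * Real.tanh (Real.sqrt μ * k) / Real.sqrt μ)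
            / (1 + (k : ℝ) * Real.tanh (Real.sqrt μ * k) / Real.sqrt μ)|
        ≤ C * Real.sqrt μ := by
  refine ⟨1, one_pos, fun μ hμ _ k hk ↦ ?_⟩
  rw [one_mul]
  exact abs_div_one_add_sq_sub_sqrt_tanh_le (sqrt_pos.2 hμ) (by exact_mod_cast hk)
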